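/- The eigenvalues λ_{2k}^n of the MDS integral operator on RP^n satisfy the recurrence (1/σ_n) λ_{2k}^n = (4k+n-2)[ (4k+n-4) · (R_{2k}^n / (σ_n R_{2k-2}^n)) · λ_{2k-2}^n − (4k+n-3) · (R_{2k}^n / (σ_{n+2} R_{2k-2}^{n+2})) · λ_{2k-2}^{n+2} ] for all n ≥ 1 and k ≥ 1. -/

import Mathlib

/-! Write `g_β(t) = (1 - t²)^β`. On `(-1, 1)` one has
`g_β'' = 2β(2β-2) g_{β-2} - 2β(2β-1) g_{β-1}`, because `t² = 1 - (1 - t²)`. For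
`β = 2k + (n-2)/2`, differentiating this `2k-2` more times expresses the Rodrigues derivative
behind `F_{2k}^n` through those behind `F_{2k-2}^n` and `F_{2k-2}^{n+2}`, with coefficients
`(4k+n-2)(4k+n-4)` and `(4k+n-2)(4k+n-3)`; integrating against `arccos²` and restoring the
constants `σ` and `R` gives the recurrence. The integrals converge: the `m`-th derivative of
`g_β` is `g_{β-m}` times a polynomial, and here `β - m = (n-2)/2 > -1`. -/

open MeasureTheory Real

noncomputable section

/-- The sphere `S^n` of radius one in `ℝ^{n+1}`. -/
abbrev unitSphere (n : ℕ) := Metric.sphere (0 : EuclideanSpace ℝ (Fin (n + 1))) 1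

/-- The (n-dimensional) volume of the round sphere `S^n ⊂ ℝ^{n+1}`. -/
def sphereVolume (n : ℕ) : ℝ := 2 * π ^ (((n : ℝ) + 1) / 2) / Real.Gamma (((n : ℝ) + 1) / 2)

/-- The constant `σ_n = -vol(S^{n-1})/vol(S^n)`. -/
def sigmaMDS (n : ℕ) : ℝ :=
  -(2 * π ^ ((n : ℝ) / 2) / Real.Gamma ((n : ℝ) / 2)) / sphereVolume n

/-- The Rodrigues constant `R_{2k}^n = 4^{-k} Γ(n/2)/Γ(n/2+2k)`. -/
def rodriguesR (n k : ℕ) : ℝ :=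
  (1 / 4 ^ k) * Real.Gamma ((n : ℝ) / 2) / Real.Gamma ((n : ℝ) / 2 + 2 * k)

/-- `F_{2k}^n(t) = P_{2k}^n(t)(1-t²)^{(n-2)/2}
  = R_{2k}^n (d/dt)^{2k} (1-t²)^{2k+(n-2)/2}` (Rodrigues formula), where `P_{2k}^n` is the
degree-`2k` Legendre polynomial for `S^n`. -/
def legendreF (n k : ℕ) (t : ℝ) : ℝ :=
  rodriguesR n k *
    iteratedDeriv (2 * k) (fun s : ℝ => (1 - s ^ 2) ^ (2 * (k : ℝ) + ((n : ℝ) - 2) / 2)) t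

/-- The eigenvalue `λ_{2k}^n = σ_n ∫_0^1 arccos²(t) P_{2k}^n(t)(1-t²)^{(n-2)/2} dt` of the MDS
integral operator on `ℝP^n` on degree-`2k` spherical harmonics. -/
def lamRP (n k : ℕ) : ℝ :=
  sigmaMDS n * ∫ t in (0 : ℝ)..1, Real.arccos t ^ 2 * legendreF n k t

/-- `φ : S^n → ℝ` is a spherical harmonic of degree `k`: the restriction to the sphere of a
smooth function on `ℝ^{n+1}` which is homogeneous of degree `k` and harmonic. -/
def IsSphericalHarmonic (n k : ℕ) (φ : unitSphere n → ℝ) : Prop :=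
  ∃ p : EuclideanSpace ℝ (Fin (n + 1)) → ℝ, ContDiff ℝ ⊤ p ∧
    (∀ (r : ℝ) (x), p (r • x) = r ^ k * p x) ∧
    (∀ x, ∑ i, fderiv ℝ (fun y => fderiv ℝ p y (EuclideanSpace.single i 1)) x
        (EuclideanSpace.single i 1) = 0) ∧
    ∀ x : unitSphere n, φ x = p (x : EuclideanSpace ℝ (Fin (n + 1)))

end

open Set Filter Topology Polynomial

noncomputable def oneSubSqRpow (β t : ℝ) : ℝ := (1 - t ^ 2) ^ β

section OneSubSqRpow

variable {t : ℝ}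

lemma one_sub_sq_pos_of_mem_Ioo (ht : t ∈ Ioo (-1 : ℝ) 1) : 0 < 1 - t ^ 2 := by
  nlinarith [ht.1, ht.2]

lemma oneSubSqRpow_add_one (β : ℝ) (ht : 1 - t ^ 2 ≠ 0) :
    oneSubSqRpow (β + 1) t = oneSubSqRpow β t * (1 - t ^ 2) :=
  rpow_add_one ht β

lemma hasDerivAt_oneSubSqRpow (β : ℝ) (ht : 1 - t ^ 2 ≠ 0) :
    HasDerivAt (oneSubSqRpow β) (-2 * β * t * oneSubSqRpow (β - 1) t) t := by
  have h : HasDerivAt (fun s : ℝ => 1 - s ^ 2) (-(2 * t)) t := by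
    simpa using (hasDerivAt_pow 2 t).const_sub 1
  unfold oneSubSqRpow
  convert h.rpow_const (p := β) (Or.inl ht) using 1
  ring

lemma contDiffAt_oneSubSqRpow (β : ℝ) (m : WithTop ℕ∞) (ht : 1 - t ^ 2 ≠ 0) :
    ContDiffAt ℝ m (oneSubSqRpow β) t :=
  (contDiffAt_const.sub (contDiffAt_id.pow 2)).rpow_const_of_ne ht

lemma deriv_deriv_oneSubSqRpow (β : ℝ) (ht : t ∈ Ioo (-1 : ℝ) 1) :
    deriv (deriv (oneSubSqRpow β)) t =
      2 * β * (2 * β - 2) * oneSubSqRpow (β - 2) t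
        - 2 * β * (2 * β - 1) * oneSubSqRpow (β - 1) t := by
  have hderiv : deriv (oneSubSqRpow β) =ᶠ[𝓝 t] fun s => -2 * β * s * oneSubSqRpow (β - 1) s :=
    eventually_of_mem (isOpen_Ioo.mem_nhds ht) fun s hs =>
      (hasDerivAt_oneSubSqRpow β (one_sub_sq_pos_of_mem_Ioo hs).ne').deriv
  have hne := (one_sub_sq_pos_of_mem_Ioo ht).ne'
  have h : HasDerivAt (fun s => -2 * β * s * oneSubSqRpow (β - 1) s)
      (-2 * β * 1 * oneSubSqRpow (β - 1) t
        + -2 * β * t * (-2 * (β - 1) * t * oneSubSqRpow (β - 1 - 1) t)) t :=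
    ((hasDerivAt_id' t).const_mul (-2 * β)).mul (hasDerivAt_oneSubSqRpow (β - 1) hne)
  rw [hderiv.deriv_eq, h.deriv, show β - 1 - 1 = β - 2 by ring,
    show β - 1 = β - 2 + 1 by ring, oneSubSqRpow_add_one _ hne]
  ring

lemma iteratedDeriv_add_two_oneSubSqRpow (β : ℝ) (m : ℕ) (ht : t ∈ Ioo (-1 : ℝ) 1) :
    iteratedDeriv (m + 2) (oneSubSqRpow β) t =
      2 * β * (2 * β - 2) * iteratedDeriv m (oneSubSqRpow (β - 2)) t
        - 2 * β * (2 * β - 1) * iteratedDeriv m (oneSubSqRpow (β - 1)) t := by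
  have hdd : deriv (deriv (oneSubSqRpow β)) =ᶠ[𝓝 t] fun s =>
      2 * β * (2 * β - 2) * oneSubSqRpow (β - 2) s
        - 2 * β * (2 * β - 1) * oneSubSqRpow (β - 1) s :=
    eventually_of_mem (isOpen_Ioo.mem_nhds ht) fun s hs => deriv_deriv_oneSubSqRpow β hs
  have hne := (one_sub_sq_pos_of_mem_Ioo ht).ne'
  rw [iteratedDeriv_succ', iteratedDeriv_succ', hdd.iteratedDeriv_eq m,
    iteratedDeriv_fun_sub (contDiffAt_const.mul (contDiffAt_oneSubSqRpow _ _ hne))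
      (contDiffAt_const.mul (contDiffAt_oneSubSqRpow _ _ hne)),
    iteratedDeriv_const_mul_field, iteratedDeriv_const_mul_field]

lemma exists_iteratedDeriv_oneSubSqRpow_eq (β : ℝ) (m : ℕ) :
    ∃ q : ℝ[X], ∀ t ∈ Ioo (-1 : ℝ) 1,
      iteratedDeriv m (oneSubSqRpow β) t = oneSubSqRpow (β - m) t * q.eval t := by
  induction m with
  | zero => exact ⟨1, fun t _ => by simp⟩
  | succ m ih =>
    obtain ⟨q, hq⟩ := ih
    refine ⟨C (-2 * (β - m)) * X * q + (1 - X ^ 2) * derivative q, fun t ht => ?_⟩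
    have hne := (one_sub_sq_pos_of_mem_Ioo ht).ne'
    have hev : iteratedDeriv m (oneSubSqRpow β) =ᶠ[𝓝 t]
        fun s => oneSubSqRpow (β - m) s * q.eval s :=
      eventually_of_mem (isOpen_Ioo.mem_nhds ht) hq
    have h : HasDerivAt (fun s => oneSubSqRpow (β - m) s * q.eval s)
        (-2 * (β - m) * t * oneSubSqRpow (β - m - 1) t * q.eval t
          + oneSubSqRpow (β - m) t * (derivative q).eval t) t :=
      (hasDerivAt_oneSubSqRpow (β - m) hne).mul (q.hasDerivAt t)
    rw [iteratedDeriv_succ, hev.deriv_eq, h.deriv,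
      show β - m = β - (m + 1 : ℕ) + 1 by push_cast; ring, oneSubSqRpow_add_one _ hne,
      show β - (m + 1 : ℕ) + 1 - 1 = β - (m + 1 : ℕ) by ring]
    simp only [eval_add, eval_mul, eval_C, eval_X, eval_pow, eval_sub, eval_one]
    push_cast
    ring

lemma intervalIntegrable_oneSubSqRpow_mul {γ : ℝ} (hγ : -1 < γ) {f : ℝ → ℝ}
    (hf : ContinuousOn f (Icc 0 1)) :
    IntervalIntegrable (fun t => oneSubSqRpow γ t * f t) volume 0 1 := by
  have hsing : IntervalIntegrable (fun t : ℝ => (1 - t) ^ γ) volume 0 1 := by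
    simpa using (intervalIntegral.intervalIntegrable_rpow' (a := 1) (b := 0) hγ).comp_sub_left 1
  have hcont : ContinuousOn (fun t : ℝ => (1 + t) ^ γ * f t) (uIcc 0 1) := by
    rw [uIcc_of_le zero_le_one]
    refine ContinuousOn.mul ?_ hf
    exact ContinuousOn.rpow_const (f := fun t => 1 + t) (by fun_prop)
      fun t ht => Or.inl (by linarith [ht.1])
  refine (hsing.mul_continuousOn hcont).congr_uIoo fun t ht => ?_
  rw [uIoo_of_le zero_le_one] at ht
  simp only [oneSubSqRpow, show 1 - t ^ 2 = (1 - t) * (1 + t) by ring,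
    mul_rpow (by linarith [ht.2] : (0 : ℝ) ≤ 1 - t) (by linarith [ht.1] : (0 : ℝ) ≤ 1 + t)]
  ring

lemma intervalIntegrable_arccos_sq_mul_iteratedDeriv_oneSubSqRpow {β : ℝ} {m : ℕ}
    (h : -1 < β - m) :
    IntervalIntegrable (fun t => arccos t ^ 2 * iteratedDeriv m (oneSubSqRpow β) t) volume 0 1 := by
  obtain ⟨q, hq⟩ := exists_iteratedDeriv_oneSubSqRpow_eq β m
  refine (intervalIntegrable_oneSubSqRpow_mul h (f := fun t => arccos t ^ 2 * q.eval t)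
    (by fun_prop)).congr_uIoo fun t ht => ?_
  rw [uIoo_of_le zero_le_one] at ht
  simp only [hq t ⟨by linarith [ht.1], ht.2⟩]
  ring

lemma integral_arccos_sq_mul_iteratedDeriv_add_two_oneSubSqRpow {β : ℝ} {m : ℕ}
    (h : 1 < β - m) :
    ∫ t in (0 : ℝ)..1, arccos t ^ 2 * iteratedDeriv (m + 2) (oneSubSqRpow β) t =
      2 * β * (2 * β - 2) *
          (∫ t in (0 : ℝ)..1, arccos t ^ 2 * iteratedDeriv m (oneSubSqRpow (β - 2)) t)
        - 2 * β * (2 * β - 1) *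
          ∫ t in (0 : ℝ)..1, arccos t ^ 2 * iteratedDeriv m (oneSubSqRpow (β - 1)) t := by
  rw [← intervalIntegral.integral_const_mul, ← intervalIntegral.integral_const_mul,
    ← intervalIntegral.integral_sub
      ((intervalIntegrable_arccos_sq_mul_iteratedDeriv_oneSubSqRpow (by linarith)).const_mul _)
      ((intervalIntegrable_arccos_sq_mul_iteratedDeriv_oneSubSqRpow (by linarith)).const_mul _)]
  refine intervalIntegral.integral_congr_uIoo fun t ht => ?_
  rw [uIoo_of_le zero_le_one] at ht
  simp only [iteratedDeriv_add_two_oneSubSqRpow β m ⟨by linarith [ht.1], ht.2⟩]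
  ring

end OneSubSqRpow

noncomputable def rodriguesDeriv (n k : ℕ) (t : ℝ) : ℝ :=
  iteratedDeriv (2 * k) (oneSubSqRpow (2 * k + ((n : ℝ) - 2) / 2)) t

lemma integral_arccos_sq_mul_rodriguesDeriv_succ {n : ℕ} (hn : 0 < n) (k : ℕ) :
    ∫ t in (0 : ℝ)..1, arccos t ^ 2 * rodriguesDeriv n (k + 1) t =
      (4 * k + n + 2) * ((4 * k + n) * (∫ t in (0 : ℝ)..1, arccos t ^ 2 * rodriguesDeriv n k t)
        - (4 * k + n + 1) * ∫ t in (0 : ℝ)..1, arccos t ^ 2 * rodriguesDeriv (n + 2) k t) := by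
  have hβ : 1 < 2 * ((k + 1 : ℕ) : ℝ) + ((n : ℝ) - 2) / 2 - (2 * k : ℕ) := by
    have : (0 : ℝ) < n := by exact_mod_cast hn
    push_cast
    linarith
  have e₂ : 2 * ((k + 1 : ℕ) : ℝ) + ((n : ℝ) - 2) / 2 - 2 = 2 * k + ((n : ℝ) - 2) / 2 := by
    push_cast; ring
  have e₁ : 2 * ((k + 1 : ℕ) : ℝ) + ((n : ℝ) - 2) / 2 - 1 =
      2 * k + (((n + 2 : ℕ) : ℝ) - 2) / 2 := by
    push_cast; ring
  simp only [rodriguesDeriv, show 2 * (k + 1) = 2 * k + 2 by ring,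
    integral_arccos_sq_mul_iteratedDeriv_add_two_oneSubSqRpow hβ, e₁, e₂]
  push_cast
  ring

lemma lamRP_eq_mul_integral_rodriguesDeriv (n k : ℕ) :
    lamRP n k = sigmaMDS n * rodriguesR n k *
      ∫ t in (0 : ℝ)..1, arccos t ^ 2 * rodriguesDeriv n k t := by
  simp only [lamRP, legendreF, mul_left_comm (arccos _ ^ 2), intervalIntegral.integral_const_mul]
  rw [mul_assoc]
  rfl

lemma rodriguesR_pos {n : ℕ} (hn : 0 < n) (k : ℕ) : 0 < rodriguesR n k := by
  unfold rodriguesR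
  positivity

lemma sigmaMDS_neg {n : ℕ} (hn : 0 < n) : sigmaMDS n < 0 := by
  unfold sigmaMDS sphereVolume
  apply div_neg_of_neg_of_pos _ (by positivity)
  simp only [Left.neg_neg_iff]
  positivity

theorem lamRP_recurrence (n k : ℕ) (hn : 1 ≤ n) (hk : 1 ≤ k) :
    (1 / sigmaMDS n) * lamRP n k
      = (4 * (k : ℝ) + n - 2) *
          ((4 * (k : ℝ) + n - 4) * (rodriguesR n k / (sigmaMDS n * rodriguesR n (k - 1)))
              * lamRP n (k - 1)
            - (4 * (k : ℝ) + n - 3)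
              * (rodriguesR n k / (sigmaMDS (n + 2) * rodriguesR (n + 2) (k - 1)))
              * lamRP (n + 2) (k - 1)) := by
  obtain ⟨k, rfl⟩ := Nat.exists_eq_add_of_le' hk
  have hσ := (sigmaMDS_neg hn).ne
  have hσ₂ := (sigmaMDS_neg (n := n + 2) (by omega)).ne
  have hR := (rodriguesR_pos hn k).ne'
  have hR₂ := (rodriguesR_pos (n := n + 2) (by omega) k).ne'
  simp only [Nat.add_sub_cancel, lamRP_eq_mul_integral_rodriguesDeriv,
    integral_arccos_sq_mul_rodriguesDeriv_succ hn]
  push_cast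
  field_simp
  ring
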